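/- arXiv:2205.01796 — 5 statements merged into one kernel-verified Lean document; each statement's English description precedes it below -/
import Mathlib

section
/- If H is a snipped subgraph of G, then the dissipation number of H is at most the dissipation number of G; in particular, for every k ≥ 0, if the k-th iterated jump graph J^k(G) has no edges, then J^k(H) has no edges. -/
open SimpleGraph

/-- The jump graph of `G`: the complement of the line graph. Vertices are edges of `G`,
adjacent iff the corresponding edges of `G` share no endpoint. -/
def SimpleGraph.jumpGraph {V : Type*} (G : SimpleGraph V) : SimpleGraph G.edgeSet :=
  (G.lineGraph)ᶜ

/-- A graph bundled with its vertex type. -/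
def GraphBundle : Type 1 := Σ V : Type, SimpleGraph V

/-- The jump graph operation on bundled graphs, allowing iteration. -/
def jumpB (g : GraphBundle) : GraphBundle := ⟨↥g.2.edgeSet, g.2.jumpGraph⟩

/-- Number of edges of a bundled graph. -/
noncomputable def edgeCount (g : GraphBundle) : ℕ := Nat.card g.2.edgeSet

/-- The quotient graph of `G` by a partition (setoid) of its vertices. -/
def quotGraph {V : Type*} (G : SimpleGraph V) (s : Setoid V) : SimpleGraph (Quotient s) where
  Adj x y := x ≠ y ∧ ∃ u v : V, Quotient.mk s u = x ∧ Quotient.mk s v = y ∧ G.Adj u v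
  symm := by
    constructor
    rintro x y ⟨hxy, u, v, hu, hv, h⟩
    exact ⟨hxy.symm, v, u, hv, hu, h.symm⟩
  loopless := by
    constructor
    rintro x ⟨h, -⟩
    exact h rfl

/-- `H` is a snipped subgraph of `G` : a quotient graph of a subgraph of `G`. -/
def IsSnippedSubgraph {W V : Type*} (H : SimpleGraph W) (G : SimpleGraph V) : Prop :=
  ∃ G' : SimpleGraph V, G' ≤ G ∧ ∃ s : Setoid V, Nonempty (H ≃g quotGraph G' s)

/-- The net graph: a triangle `0,1,2` with pendant vertices `3,4,5`. -/
def netGraph : SimpleGraph (Fin 6) :=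
  SimpleGraph.fromEdgeSet {s(0,1), s(1,2), s(0,2), s(0,3), s(1,4), s(2,5)}

/-- Dissipation number: least `k` with `J^k(G)` the empty graph, as an extended natural. -/
noncomputable def dissipationNumber (g : GraphBundle) : ℕ∞ :=
  sInf {k : ℕ∞ | ∃ n : ℕ, k = n ∧ IsEmpty (jumpB^[n] g).1}

/-- Auxiliary invariant: `g.1` is empty, or there is a surjective `p : h.1 → g.1` such that
every edge of `g.2` is the image under `Sym2.map p` of an edge of `h.2`. -/
def GoodB (g h : GraphBundle) : Prop :=
  IsEmpty g.1 ∨ ∃ p : h.1 → g.1, Function.Surjective p ∧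
    ∀ e : g.2.edgeSet, ∃ f : h.2.edgeSet, Sym2.map p (f : Sym2 h.1) = (e : Sym2 g.1)

lemma isEmpty_edgeSet_of_isEmpty {W : Type} (H : SimpleGraph W) (h : IsEmpty W) :
    IsEmpty H.edgeSet := by
  constructor
  rintro ⟨e, he⟩
  induction e using Sym2.ind with
  | _ a b => exact isEmptyElim a

lemma goodB_step {g h : GraphBundle} (hg : GoodB g h) : GoodB (jumpB g) (jumpB h) := by
  obtain ⟨W, H⟩ := g
  obtain ⟨V, G⟩ := h
  show GoodB ⟨H.edgeSet, H.jumpGraph⟩ ⟨G.edgeSet, G.jumpGraph⟩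
  rcases hg with hW | ⟨p, psurj, hp⟩
  · exact Or.inl (isEmpty_edgeSet_of_isEmpty H hW)
  by_cases he : IsEmpty H.edgeSet
  · exact Or.inl he
  obtain ⟨d⟩ := not_isEmpty_iff.mp he
  choose L hL using hp
  have mem : ∀ (e : H.edgeSet) (v : V), v ∈ (L e : Sym2 V) → p v ∈ (e : Sym2 W) := by
    intro e v hv
    rw [← hL e]
    exact Sym2.mem_map.mpr ⟨v, hv, rfl⟩
  have Linj : Function.Injective L := by
    intro e1 e2 h12
    apply Subtype.ext
    rw [← hL e1, ← hL e2, h12]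
  classical
  set p' : G.edgeSet → H.edgeSet := fun f => if h : ∃ e, L e = f then h.choose else d with hp'def
  have hp'L : ∀ e, p' (L e) = e := by
    intro e
    have hex : ∃ e', L e' = L e := ⟨e, rfl⟩
    simp only [hp'def, dif_pos hex]
    exact Linj hex.choose_spec
  refine Or.inr ⟨p', fun e => ⟨L e, hp'L e⟩, ?_⟩
  rintro ⟨E, hE⟩
  induction E using Sym2.ind with
  | _ e1 e2 =>
    rw [SimpleGraph.mem_edgeSet] at hE
    have hE' : H.jumpGraph.Adj e1 e2 := hE
    rw [SimpleGraph.jumpGraph, SimpleGraph.compl_adj] at hE'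
    obtain ⟨hne, hnl⟩ := hE'
    have hdisj : ∀ v : W, v ∈ (e1 : Sym2 W) → v ∈ (e2 : Sym2 W) → False := by
      intro v h1 h2
      exact hnl ⟨hne, ⟨v, h1, h2⟩⟩
    have hLne : L e1 ≠ L e2 := fun h12 => hne (Linj h12)
    have hadj : G.jumpGraph.Adj (L e1) (L e2) := by
      rw [SimpleGraph.jumpGraph, SimpleGraph.compl_adj]
      refine ⟨hLne, ?_⟩
      rintro ⟨-, v, h1, h2⟩
      exact hdisj (p v) (mem e1 v h1) (mem e2 v h2)
    exact ⟨⟨s(L e1, L e2), hadj⟩, by simp [Sym2.map_pair_eq, hp'L]⟩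

lemma goodB_iter {g h : GraphBundle} (hg : GoodB g h) (k : ℕ) :
    GoodB (jumpB^[k] g) (jumpB^[k] h) := by
  induction k with
  | zero => exact hg
  | succ n ih =>
    rw [Function.iterate_succ_apply', Function.iterate_succ_apply']
    exact goodB_step ih

lemma goodB_isEmpty {g h : GraphBundle} (hg : GoodB g h) (hh : IsEmpty h.1) : IsEmpty g.1 := by
  rcases hg with hW | ⟨p, psurj, -⟩
  · exact hW
  constructor
  intro w
  obtain ⟨v, -⟩ := psurj w
  exact isEmptyElim v

lemma goodB_edgeSet {g h : GraphBundle} (hg : GoodB g h) (hh : h.2.edgeSet = ∅) :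
    g.2.edgeSet = ∅ := by
  rcases hg with hW | ⟨p, -, hp⟩
  · rw [Set.eq_empty_iff_forall_notMem]
    intro e he
    exact (isEmpty_edgeSet_of_isEmpty g.2 hW).false ⟨e, he⟩
  rw [Set.eq_empty_iff_forall_notMem]
  intro e he
  obtain ⟨⟨f, hf⟩, -⟩ := hp ⟨e, he⟩
  rw [Set.eq_empty_iff_forall_notMem] at hh
  exact hh f hf

lemma goodB_of_snipped {W V : Type} {H : SimpleGraph W} {G : SimpleGraph V}
    (h : IsSnippedSubgraph H G) : GoodB ⟨W, H⟩ ⟨V, G⟩ := by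
  obtain ⟨G', hle, s, ⟨φ⟩⟩ := h
  refine Or.inr ⟨fun v => φ.symm (Quotient.mk s v), ?_, ?_⟩
  · intro w
    obtain ⟨u, hu⟩ := Quotient.exists_rep (φ w)
    exact ⟨u, by simp [hu]⟩
  · rintro ⟨e, he⟩
    induction e using Sym2.ind with
    | _ x y =>
      rw [SimpleGraph.mem_edgeSet] at he
      have hq : (quotGraph G' s).Adj (φ x) (φ y) := φ.map_adj_iff.mpr he
      obtain ⟨-, u, v, hu, hv, hadj⟩ := hq
      refine ⟨⟨s(u, v), hle hadj⟩, ?_⟩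
      simp only [Sym2.map_pair_eq]
      rw [hu, hv]
      simp

/-- If `H` is a snipped subgraph of `G` then `d(H) ≤ d(G)`; in particular if `J^k(G)` has no
edges then `J^k(H)` has no edges. -/
theorem stmt3 {W V : Type} (H : SimpleGraph W) (G : SimpleGraph V)
    (h : IsSnippedSubgraph H G) :
    dissipationNumber ⟨W, H⟩ ≤ dissipationNumber ⟨V, G⟩ ∧
    ∀ k : ℕ, (jumpB^[k] ⟨V, G⟩).2.edgeSet = ∅ → (jumpB^[k] ⟨W, H⟩).2.edgeSet = ∅ := by
  have hgood := goodB_of_snipped h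
  constructor
  · apply sInf_le_sInf
    rintro k ⟨n, rfl, hn⟩
    exact ⟨n, rfl, goodB_isEmpty (goodB_iter hgood n) hn⟩
  · intro k hk
    exact goodB_edgeSet (goodB_iter hgood k) hk
end

section
/- If a simple graph G is disconnected and every connected component of G contains at least one edge, then the jump graph J(G) is connected; moreover, any two vertices of J(G) are joined by a path of length at most 2. -/
open SimpleGraph

private lemma jump_adj' {V : Type*} {G : SimpleGraph V} {e f : G.edgeSet} :
    G.jumpGraph.Adj e f ↔ e ≠ f ∧ ∀ v ∈ (e : Sym2 V), v ∉ (f : Sym2 V) := by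
  simp only [SimpleGraph.jumpGraph, SimpleGraph.compl_adj,
    SimpleGraph.lineGraph_adj_iff_exists]
  constructor
  · rintro ⟨hne, h⟩
    exact ⟨hne, fun v hv hv' => h ⟨hne, v, hv, hv'⟩⟩
  · rintro ⟨hne, h⟩
    exact ⟨hne, fun ⟨_, v, hv, hv'⟩ => h v hv hv'⟩

private lemma reach_of_mem_edge {V : Type*} {G : SimpleGraph V} {e : Sym2 V}
    (he : e ∈ G.edgeSet) {a b : V} (ha : a ∈ e) (hb : b ∈ e) : G.Reachable a b := by
  induction e with
  | h p q =>
    have hpq : G.Adj p q := he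
    rcases Sym2.mem_iff.mp ha with rfl | rfl <;> rcases Sym2.mem_iff.mp hb with rfl | rfl
    · rfl
    · exact hpq.reachable
    · exact hpq.symm.reachable
    · rfl

/-- If `G` is disconnected and every component contains an edge (equivalently, every vertex has
a neighbour), then `J(G)` is connected and any two of its vertices are at distance at most 2. -/
theorem stmt10 {V : Type*} (G : SimpleGraph V) (hne : Nonempty V) (hdisc : ¬ G.Connected)
    (hdeg : ∀ v : V, ∃ w, G.Adj v w) :
    G.jumpGraph.Connected ∧ ∀ e f : G.edgeSet, G.jumpGraph.edist e f ≤ 2 := by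
  -- obtain two non-reachable vertices
  have hpre : ¬ G.Preconnected := fun h => hdisc ⟨h⟩
  rw [SimpleGraph.Preconnected] at hpre
  push_neg at hpre
  obtain ⟨u, v, huv⟩ := hpre
  -- given a vertex a, find an edge whose endpoints are not reachable from a
  have key : ∀ a : V, ∃ g : G.edgeSet, ∀ x ∈ (g : Sym2 V), ¬ G.Reachable a x := by
    intro a
    by_cases hau : G.Reachable a u
    · obtain ⟨w, hw⟩ := hdeg v
      refine ⟨⟨s(v, w), hw⟩, ?_⟩
      intro x hx hax
      have : G.Reachable v x := reach_of_mem_edge hw (Sym2.mem_mk_left v w) hx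
      exact huv (hau.symm.trans (hax.trans this.symm))
    · obtain ⟨w, hw⟩ := hdeg u
      refine ⟨⟨s(u, w), hw⟩, ?_⟩
      intro x hx hax
      have : G.Reachable u x := reach_of_mem_edge hw (Sym2.mem_mk_left u w) hx
      exact hau (hax.trans this.symm)
  have main : ∀ e f : G.edgeSet, G.jumpGraph.edist e f ≤ 2 := by
    intro e f
    by_cases hef : e = f
    · subst hef; simp
    by_cases hadj : G.jumpGraph.Adj e f
    · rw [SimpleGraph.edist_eq_one_iff_adj.mpr hadj]; norm_num
    -- e and f share a vertex a
    have hsh : ∃ a, a ∈ (e : Sym2 V) ∧ a ∈ (f : Sym2 V) := by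
      by_contra h
      push_neg at h
      exact hadj (jump_adj'.mpr ⟨hef, h⟩)
    obtain ⟨a, hae, haf⟩ := hsh
    obtain ⟨g, hg⟩ := key a
    have hre : ∀ x ∈ (e : Sym2 V), G.Reachable a x := fun x hx =>
      reach_of_mem_edge e.2 hae hx
    have hrf : ∀ x ∈ (f : Sym2 V), G.Reachable a x := fun x hx =>
      reach_of_mem_edge f.2 haf hx
    have hne : ∀ h : G.edgeSet, (∀ x ∈ (h : Sym2 V), G.Reachable a x) → G.jumpGraph.Adj h g := by
      intro h hh
      refine jump_adj'.mpr ⟨?_, fun x hx hx' => hg x hx' (hh x hx)⟩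
      have hex : ∃ p, p ∈ (h : Sym2 V) := by
        induction (h : Sym2 V) with
        | h p q => exact ⟨p, Sym2.mem_mk_left p q⟩
      obtain ⟨p, hp⟩ := hex
      rintro rfl
      exact hg p hp (hh p hp)
    have h1 : G.jumpGraph.Adj e g := hne e hre
    have h2 : G.jumpGraph.Adj g f := (hne f hrf).symm
    calc G.jumpGraph.edist e f ≤ G.jumpGraph.edist e g + G.jumpGraph.edist g f :=
        SimpleGraph.edist_triangle
      _ ≤ 1 + 1 := add_le_add (le_of_eq (SimpleGraph.edist_eq_one_iff_adj.mpr h1))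
          (le_of_eq (SimpleGraph.edist_eq_one_iff_adj.mpr h2))
      _ = 2 := by norm_num
  obtain ⟨v0⟩ := hne
  obtain ⟨w, hw⟩ := hdeg v0
  have : Nonempty G.edgeSet := ⟨⟨s(v0, w), hw⟩⟩
  refine ⟨SimpleGraph.Connected.mk fun e f => ?_, main⟩
  exact SimpleGraph.reachable_of_edist_ne_top (lt_of_le_of_lt (main e f) (by decide)).ne
end

section
/- If a simple graph G contains C_5 as a subgraph, then |E(G)| ≤ |E(J(G))|, i.e., the jump graph has at least as many edges as G. -/
open SimpleGraph

/-- If `G` contains `C₅` as a subgraph, then `|E(G)| ≤ |E(J(G))|`. -/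
theorem stmt11 {V : Type*} [Fintype V] (G : SimpleGraph V)
    (f : cycleGraph 5 →g G) (hf : Function.Injective f) :
    Nat.card G.edgeSet ≤ Nat.card G.jumpGraph.edgeSet := by
  classical
  -- the five edges of the cycle, as edges of `G`
  have hadj : ∀ i : Fin 5, G.Adj (f i) (f (i + 1)) := by
    intro i
    refine f.map_adj ?_
    show (cycleGraph (3 + 2)).Adj i (i + 1)
    rw [cycleGraph_adj]
    right; simp
  set c : Fin 5 → G.edgeSet := fun i => ⟨s(f i, f (i + 1)), G.mem_edgeSet.mpr (hadj i)⟩ with hc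
  have hmemc : ∀ (v : V) (i : Fin 5), v ∈ (c i : Sym2 V) ↔ v = f i ∨ v = f (i + 1) := by
    intro v i
    simp [hc]
  have hc_inj : Function.Injective c := by
    intro i j h
    have h' : s(f i, f (i + 1)) = s(f j, f (j + 1)) := congrArg Subtype.val h
    rw [Sym2.eq_iff] at h'
    rcases h' with ⟨h1, _⟩ | ⟨h1, h2⟩
    · exact hf h1
    · have e1 : i = j + 1 := hf h1
      have e2 : i + 1 = j := hf h2
      exfalso
      have : ∀ i : Fin 5, i ≠ i + 1 + 1 := by decide
      exact this i (by rw [e1] at e2 ⊢; rw [e2])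
  -- jump graph adjacency criterion
  have jadj : ∀ x y : G.edgeSet, x ≠ y → (∀ v : V, v ∈ (x : Sym2 V) → v ∉ (y : Sym2 V)) →
      G.jumpGraph.Adj x y := by
    intro x y hne hdisj
    rw [SimpleGraph.jumpGraph, compl_adj]
    refine ⟨hne, fun hadj' => ?_⟩
    obtain ⟨-, v, hv1, hv2⟩ := lineGraph_adj_iff_exists.mp hadj'
    exact hdisj v hv1 hv2
  -- c i and c (i+2) are adjacent in the jump graph
  have hcdisj : ∀ i : Fin 5, ∀ v : V, v ∈ (c i : Sym2 V) → v ∉ (c (i + 2) : Sym2 V) := by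
    intro i v hv1 hv2
    rw [hmemc] at hv1 hv2
    have harith : ∀ i : Fin 5, i ≠ i + 2 ∧ i ≠ i + 2 + 1 ∧ i + 1 ≠ i + 2 ∧ i + 1 ≠ i + 2 + 1 := by
      decide
    obtain ⟨a1, a2, a3, a4⟩ := harith i
    rcases hv1 with rfl | rfl <;> rcases hv2 with h | h
    · exact a1 (hf h)
    · exact a2 (hf h)
    · exact a3 (hf h)
    · exact a4 (hf h)
  have hcc : ∀ i : Fin 5, G.jumpGraph.Adj (c i) (c (i + 2)) := by
    intro i
    refine jadj _ _ (fun h => ?_) (hcdisj i)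
    have : ∀ i : Fin 5, i ≠ i + 2 := by decide
    exact this i (hc_inj h)
  -- every edge is jump-adjacent to some cycle edge
  have hkey : ∀ e : G.edgeSet, ∃ i : Fin 5, G.jumpGraph.Adj e (c i) := by
    intro e
    obtain ⟨a, b, hab⟩ := Sym2.exists.mp ⟨(e : Sym2 V), rfl⟩
    set T : V → Finset (Fin 5) := fun v => Finset.univ.filter (fun i => v ∈ (c i : Sym2 V))
      with hT
    have hTcard : ∀ v : V, (T v).card ≤ 2 := by
      intro v
      by_cases hr : ∃ j, f j = v
      · obtain ⟨j, rfl⟩ := hr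
        have hsub : T (f j) ⊆ {j, j - 1} := by
          intro i hi
          rw [hT] at hi
          simp only [Finset.mem_filter, Finset.mem_univ, true_and, hmemc] at hi
          simp only [Finset.mem_insert, Finset.mem_singleton]
          rcases hi with h | h
          · exact Or.inl (hf h).symm
          · right
            have : j = i + 1 := hf h
            rw [this]; simp
        calc (T (f j)).card ≤ ({j, j - 1} : Finset (Fin 5)).card := Finset.card_le_card hsub
          _ ≤ 2 := (Finset.card_insert_le _ _).trans (by simp)
      · have : T v = ∅ := by
          rw [hT]
          ext i
          simp only [Finset.mem_filter, Finset.mem_univ, true_and, hmemc,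
            Finset.notMem_empty, iff_false]
          rintro (rfl | rfl) <;> exact hr ⟨_, rfl⟩
        simp [this]
    have hlt : (T a ∪ T b).card < 5 := by
      have := Finset.card_union_le (T a) (T b)
      have h1 := hTcard a
      have h2 := hTcard b
      omega
    have hex : ∃ i : Fin 5, i ∉ T a ∪ T b := by
      by_contra hcon
      push_neg at hcon
      have : (Finset.univ : Finset (Fin 5)) ⊆ T a ∪ T b := fun i _ => hcon i
      have := Finset.card_le_card this
      simp at this
      omega
    obtain ⟨i, hi⟩ := hex
    have hdisj : ∀ v : V, v ∈ (e : Sym2 V) → v ∉ (c i : Sym2 V) := by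
      intro v hv hv'
      rw [hab, Sym2.mem_iff] at hv
      apply hi
      rcases hv with rfl | rfl
      · exact Finset.mem_union_left _ (by
          rw [hT]; simp only [Finset.mem_filter, Finset.mem_univ, true_and]; exact hv')
      · exact Finset.mem_union_right _ (by
          rw [hT]; simp only [Finset.mem_filter, Finset.mem_univ, true_and]; exact hv')
    refine ⟨i, jadj _ _ (fun h => ?_) hdisj⟩
    have : f i ∈ (c i : Sym2 V) := (hmemc _ _).mpr (Or.inl rfl)
    exact hdisj (f i) (h ▸ this) this
  -- the selector: each edge gets a cycle edge jump-adjacent to it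
  set sel : G.edgeSet → Fin 5 := fun e =>
    if h : ∃ i, e = c i then h.choose + 2 else (hkey e).choose with hsel_def
  have hsel_adj : ∀ e : G.edgeSet, G.jumpGraph.Adj e (c (sel e)) := by
    intro e
    simp only [hsel_def]
    split_ifs with h
    · have hspec := h.choose_spec
      generalize hj : h.choose = j at hspec ⊢
      rw [hspec]
      exact hcc j
    · exact (hkey e).choose_spec
  have hsel_c : ∀ i : Fin 5, sel (c i) = i + 2 := by
    intro i
    have h : ∃ j, c i = c j := ⟨i, rfl⟩
    simp only [hsel_def]
    rw [dif_pos h]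
    have hspec := h.choose_spec
    generalize hj : h.choose = j at hspec ⊢
    rw [← hc_inj hspec.symm]
  -- build the injection
  set φ : G.edgeSet → G.jumpGraph.edgeSet := fun e =>
    ⟨s(e, c (sel e)), G.jumpGraph.mem_edgeSet.mpr (hsel_adj e)⟩ with hφ
  have hφ_inj : Function.Injective φ := by
    intro e₁ e₂ h
    simp only [hφ, Subtype.mk_eq_mk, Sym2.eq_iff] at h
    rcases h with ⟨he, -⟩ | ⟨ha, hb⟩
    · exact he
    · exfalso
      have q1 : sel e₁ = sel e₂ + 2 := by rw [ha, hsel_c]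
      have q2 : sel e₂ = sel e₁ + 2 := by rw [← hb, hsel_c]
      have : ∀ i : Fin 5, i ≠ i + 2 + 2 := by decide
      exact this (sel e₁) (by rw [q1] at q2 ⊢; rw [← q2])
  exact Nat.card_le_card_of_injective φ hφ_inj
end

section
/- If a simple graph G contains the net graph N as a subgraph, then |E(J(G))| ≥ 2·|E(G)| − 6. In particular if N is a strict subgraph of G (i.e., |E(G)| ≥ 7), then |E(J(G))| ≥ |E(G)| + 1. -/
open SimpleGraph

def netP : Fin 6 → Fin 6 × Fin 6 := ![(0,1),(1,2),(0,2),(0,3),(1,4),(2,5)]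
def netL (k : Fin 6) : Sym2 (Fin 6) := s((netP k).1, (netP k).2)
def pairP : Fin 6 → Fin 6 × Fin 6 := ![(0,5),(1,3),(2,4),(3,4),(3,5),(4,5)]

def hitB (o : Option (Fin 6)) (k : Fin 6) : Bool :=
  match o with
  | none => false
  | some i => decide (i ∈ netL k)

lemma netL_inj : Function.Injective netL := by decide
lemma pairP_disj : ∀ k, ∀ i ∈ netL (pairP k).1, i ∉ netL (pairP k).2 := by decide
lemma pairP_ne : ∀ k, (pairP k).1 ≠ (pairP k).2 := by decide
lemma pairP_inj : Function.Injective (fun k => s(netL (pairP k).1, netL (pairP k).2)) := by decide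
lemma tri : ∀ i j : Fin 6, i ≠ j → i ≤ 2 → j ≤ 2 → ∃ k, netL k = s(i,j) := by decide
lemma core : ∀ o p : Option (Fin 6), (∀ i j, o = some i → p = some j → ¬(i ≤ 2 ∧ j ≤ 2)) →
    ∃ k l : Fin 6, k ≠ l ∧ ¬hitB o k ∧ ¬hitB p k ∧ ¬hitB o l ∧ ¬hitB p l := by decide

lemma netAdj : ∀ k : Fin 6, netGraph.Adj (netP k).1 (netP k).2 := by
  intro k; fin_cases k <;> simp [netGraph, netP] <;> decide


/-- If `G` contains the net graph as a subgraph then `|E(J(G))| ≥ 2|E(G)| - 6`; in particular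
if `|E(G)| ≥ 7` then `|E(J(G))| ≥ |E(G)| + 1`. -/
theorem stmt12 {V : Type*} [Fintype V] (G : SimpleGraph V)
    (f : netGraph →g G) (hf : Function.Injective f) :
    2 * Nat.card G.edgeSet - 6 ≤ Nat.card G.jumpGraph.edgeSet ∧
    (7 ≤ Nat.card G.edgeSet → Nat.card G.edgeSet + 1 ≤ Nat.card G.jumpGraph.edgeSet) := by
  classical
  set a : Fin 6 → V := ⇑f with ha
  have hainj : Function.Injective a := hf
  set n : Fin 6 → Sym2 V := fun k => Sym2.map a (netL k) with hn
  have hninj : Function.Injective n :=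
    fun k l h => netL_inj (Sym2.map.injective hainj h)
  have hnE : ∀ k, n k ∈ G.edgeSet := by
    intro k
    have h := f.map_adj (netAdj k)
    simpa [hn, netL, Sym2.map_pair_eq] using h
  -- option encoding of vertices
  have hox : ∀ x : V, ∃ o : Option (Fin 6), ∀ i, o = some i ↔ a i = x := by
    intro x
    by_cases h : ∃ i, a i = x
    · obtain ⟨i, hi⟩ := h
      refine ⟨some i, fun j => ⟨?_, ?_⟩⟩
      · intro hj; cases hj; exact hi
      · intro hj; have : j = i := hainj (hj.trans hi.symm); rw [this]
    · refine ⟨none, fun j => Iff.intro (fun h' => by simp at h') (fun hj => absurd ⟨j, hj⟩ h)⟩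
  have notmem : ∀ (x : V) (o : Option (Fin 6)), (∀ i, o = some i ↔ a i = x) →
      ∀ k, ¬ hitB o k → x ∉ n k := by
    intro x o hxo k hk hx
    rw [hn] at hx
    obtain ⟨j, hj, hjx⟩ := Sym2.mem_map.1 hx
    have ho : o = some j := (hxo j).2 hjx
    apply hk
    rw [ho]
    simpa [hitB] using hj
  -- key lemma
  have key : ∀ e ∈ G.edgeFinset, (∀ k, n k ≠ e) →
      ∃ k l : Fin 6, k ≠ l ∧ (∀ v ∈ n k, v ∉ e) ∧ (∀ v ∈ n l, v ∉ e) := by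
    intro e
    induction e using Sym2.ind with
    | _ x y =>
      intro he hne
      have hxy : G.Adj x y := by simpa using he
      obtain ⟨o, ho⟩ := hox x
      obtain ⟨p, hp⟩ := hox y
      have hcond : ∀ i j, o = some i → p = some j → ¬(i ≤ 2 ∧ j ≤ 2) := by
        rintro i j hi hj ⟨hi2, hj2⟩
        have hxi : a i = x := (ho i).1 hi
        have hyj : a j = y := (hp j).1 hj
        have hij : i ≠ j := by
          intro h
          exact hxy.ne (by rw [← hxi, ← hyj, h])
        obtain ⟨k, hk⟩ := tri i j hij hi2 hj2
        apply hne k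
        rw [hn]
        simp only
        rw [hk, Sym2.map_pair_eq, hxi, hyj]
      obtain ⟨k, l, hkl, hok, hpk, hol, hpl⟩ := core o p hcond
      have hdisj : ∀ m : Fin 6, ¬hitB o m → ¬hitB p m → ∀ v ∈ n m, v ∉ s(x, y) := by
        intro m h1 h2 v hv hvxy
        rcases Sym2.mem_iff.1 hvxy with rfl | rfl
        · exact notmem v o ho m h1 hv
        · exact notmem v p hp m h2 hv
      exact ⟨k, l, hkl, hdisj k hok hpk, hdisj l hol hpl⟩
  -- counting
  set E : Finset (Sym2 V) := G.edgeFinset with hE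
  set N6 : Finset (Sym2 V) := Finset.image n Finset.univ with hN6
  have hN6card : N6.card = 6 := by
    rw [hN6, Finset.card_image_of_injective _ hninj]; simp
  have hN6sub : N6 ⊆ E := by
    intro e he
    rw [hN6] at he
    obtain ⟨k, -, rfl⟩ := Finset.mem_image.1 he
    simpa [hE] using hnE k
  have hm6 : 6 ≤ E.card := hN6card ▸ Finset.card_le_card hN6sub
  set P : Finset (Sym2 (Sym2 V)) := G.jumpGraph.edgeFinset.image (Sym2.map Subtype.val) with hP
  have hPcard : P.card = Nat.card G.jumpGraph.edgeSet := by
    rw [hP, Finset.card_image_of_injective _ (Sym2.map.injective Subtype.val_injective),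
      Nat.card_eq_fintype_card, ← Set.toFinset_card]
    congr 1
  have hPmem : ∀ e1 e2 : Sym2 V, e1 ∈ G.edgeSet → e2 ∈ G.edgeSet → e1 ≠ e2 →
      (∀ v ∈ e1, v ∉ e2) → s(e1, e2) ∈ P := by
    intro e1 e2 h1 h2 hne hd
    rw [hP]
    refine Finset.mem_image.2 ⟨s((⟨e1, h1⟩ : G.edgeSet), (⟨e2, h2⟩ : G.edgeSet)), ?_, Sym2.map_pair_eq _ _ _⟩
    rw [mem_edgeFinset, mem_edgeSet]
    refine ⟨fun h => hne (congrArg Subtype.val h), fun hL => ?_⟩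
    obtain ⟨-, v, hv1, hv2⟩ := lineGraph_adj_iff_exists.1 hL
    exact hd v hv1 hv2
  set I6 : Finset (Sym2 (Sym2 V)) :=
    Finset.image (fun k => s(n (pairP k).1, n (pairP k).2)) Finset.univ with hI6
  have hI6card : I6.card = 6 := by
    rw [hI6, Finset.card_image_of_injective, Finset.card_univ, Fintype.card_fin]
    intro k l h
    apply pairP_inj
    simp only at h ⊢
    rcases Sym2.eq_iff.1 h with ⟨h1, h2⟩ | ⟨h1, h2⟩
    · rw [hninj h1, hninj h2]
    · rw [Sym2.eq_swap]
      rw [hninj h1, hninj h2]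
  have hI6sub : I6 ⊆ P := by
    intro z hz
    rw [hI6] at hz
    obtain ⟨k, -, rfl⟩ := Finset.mem_image.1 hz
    refine hPmem _ _ (hnE _) (hnE _) (fun h => pairP_ne k (netL_inj (Sym2.map.injective hainj h))) ?_
    intro v hv1 hv2
    rw [hn] at hv1 hv2
    obtain ⟨i, hi, hiv⟩ := Sym2.mem_map.1 hv1
    obtain ⟨j, hj, hjv⟩ := Sym2.mem_map.1 hv2
    have : i = j := hainj (hiv.trans hjv.symm)
    exact pairP_disj k i hi (this ▸ hj)
  set M : Finset (Sym2 (Sym2 V)) := (E \ N6).biUnion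
    (fun e => (Finset.univ.filter (fun k => ∀ v ∈ n k, v ∉ e)).image (fun k => s(n k, e))) with hM
  have hnotN6 : ∀ e ∈ E \ N6, ∀ k, n k ≠ e := by
    intro e he k hk
    exact (Finset.mem_sdiff.1 he).2 (hN6 ▸ Finset.mem_image.2 ⟨k, Finset.mem_univ k, hk⟩)
  have hMcard : 2 * (E.card - 6) ≤ M.card := by
    rw [hM, Finset.card_biUnion]
    · calc 2 * (E.card - 6) = (E \ N6).card * 2 := by
            rw [Finset.card_sdiff_of_subset hN6sub, hN6card, Nat.mul_comm]
        _ = ∑ _e ∈ E \ N6, 2 := by rw [Finset.sum_const, smul_eq_mul]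
        _ ≤ _ := by
            refine Finset.sum_le_sum ?_
            intro e he
            obtain ⟨k, l, hkl, hk, hl⟩ := key e (Finset.mem_sdiff.1 he).1 (hnotN6 e he)
            have hsub2 : ({k, l} : Finset (Fin 6)) ⊆
                Finset.univ.filter (fun k => ∀ v ∈ n k, v ∉ e) := by
              intro m hm
              rcases Finset.mem_insert.1 hm with rfl | hm
              · exact Finset.mem_filter.2 ⟨Finset.mem_univ _, hk⟩
              · rw [Finset.mem_singleton.1 hm]
                exact Finset.mem_filter.2 ⟨Finset.mem_univ _, hl⟩
            have h2 : 2 ≤ (Finset.univ.filter (fun k => ∀ v ∈ n k, v ∉ e)).card := by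
              calc 2 = ({k, l} : Finset (Fin 6)).card := (Finset.card_pair hkl).symm
                _ ≤ _ := Finset.card_le_card hsub2
            refine le_trans h2 (le_of_eq ?_)
            rw [Finset.card_image_of_injOn]
            intro k1 hk1 k2 hk2 h
            simp only at h
            rcases Sym2.eq_iff.1 h with ⟨h1, -⟩ | ⟨h1, h2'⟩
            · exact hninj h1
            · exact absurd h2'.symm (hnotN6 e he k2)
    · intro e1 h1 e2 h2 hne
      refine Finset.disjoint_left.2 ?_
      intro z hz1 hz2
      obtain ⟨k1, -, rfl⟩ := Finset.mem_image.1 hz1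
      obtain ⟨k2, -, hz⟩ := Finset.mem_image.1 hz2
      rcases Sym2.eq_iff.1 hz with ⟨-, h⟩ | ⟨h', h⟩
      · exact hne h.symm
      · exact hnotN6 e1 h1 k2 h'
  have hIMdisj : Disjoint I6 M := by
    refine Finset.disjoint_left.2 ?_
    intro z hz1 hz2
    rw [hI6] at hz1
    rw [hM] at hz2
    obtain ⟨k, -, rfl⟩ := Finset.mem_image.1 hz1
    obtain ⟨e, he, hz⟩ := Finset.mem_biUnion.1 hz2
    obtain ⟨k', -, hz'⟩ := Finset.mem_image.1 hz
    rcases Sym2.eq_iff.1 hz' with ⟨-, h⟩ | ⟨-, h⟩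
    · exact hnotN6 e he _ h.symm
    · exact hnotN6 e he _ h.symm
  have hMsub : M ⊆ P := by
    intro z hz
    rw [hM] at hz
    obtain ⟨e, he, hz⟩ := Finset.mem_biUnion.1 hz
    obtain ⟨k, hk, rfl⟩ := Finset.mem_image.1 hz
    have hd := (Finset.mem_filter.1 hk).2
    exact hPmem _ _ (hnE k) (mem_edgeFinset.1 (Finset.mem_sdiff.1 he).1)
      (hnotN6 e he k) hd
  have hsub : I6 ∪ M ⊆ P := Finset.union_subset hI6sub hMsub
  have hfinal : 6 + 2 * (E.card - 6) ≤ P.card := by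
    calc 6 + 2 * (E.card - 6) ≤ I6.card + M.card := by omega
      _ = (I6 ∪ M).card := (Finset.card_union_of_disjoint hIMdisj).symm
      _ ≤ P.card := Finset.card_le_card hsub
  have hmE : Nat.card G.edgeSet = E.card := by
    rw [Nat.card_eq_fintype_card, ← Set.toFinset_card]
    congr 1
  rw [hmE, ← hPcard]
  exact ⟨by omega, fun h7 => by omega⟩
end

section
/- If a simple graph G has C_5 as a strict subgraph (a copy of C_5 plus at least one additional edge), then the number of edges of the iterated jump graphs J^k(G) tends to infinity as k → ∞; in fact |E(J^{k+1}(G))| ≥ |E(J^k(G))| for all k, and the sequence is eventually strictly increasing. -/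
open SimpleGraph

/-! ### Auxiliary development -/

namespace JP

open Finset

/-- Fin 5 arithmetic facts. -/
lemma fin5_adj : ∀ i : Fin 5, (cycleGraph 5).Adj i (i + 1) := by decide

lemma fin5_d : ∀ i : Fin 5, i ≠ i + 2 ∧ i ≠ i + 2 + 1 ∧ i + 1 ≠ i + 2 ∧ i + 1 ≠ i + 2 + 1 := by
  decide

lemma fin5_p : ∀ i : Fin 5, i + 2 + 2 ≠ i := by decide

lemma fin5_two_mul_inj : ∀ a b : Fin 5, 2 * a = 2 * b → a = b := by decide

lemma fin5_succ_ne : ∀ j : Fin 5, j + 1 + 1 ≠ j := by decide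

/-- Two `Sym2`s are disjoint: no common member. -/
def Disj {α : Type*} (a b : Sym2 α) : Prop := ∀ v, v ∈ a → v ∉ b

lemma Disj.symm' {α : Type*} {a b : Sym2 α} (h : Disj a b) : Disj b a :=
  fun v hv hva => h v hva hv

lemma Disj.ne {α : Type*} {a b : Sym2 α} (h : Disj a b) : a ≠ b := by
  induction a using Sym2.ind with
  | _ x y =>
    intro he
    exact h x (Sym2.mem_mk_left x y) (he ▸ Sym2.mem_mk_left x y)

variable {V : Type*} {G : SimpleGraph V}

lemma jump_adj_of_disj {e₁ e₂ : G.edgeSet} (h : Disj (e₁ : Sym2 V) (e₂ : Sym2 V)) :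
    G.jumpGraph.Adj e₁ e₂ := by
  show (G.lineGraph)ᶜ.Adj e₁ e₂
  rw [compl_adj]
  refine ⟨fun he => h.ne (congrArg Subtype.val he), ?_⟩
  rw [lineGraph_adj_iff_exists]
  rintro ⟨-, v, hv1, hv2⟩
  exact h v hv1 hv2

section WithHom

variable (f : cycleGraph 5 →g G)

/-- The `i`-th edge of the 5-cycle in `G`. -/
def ce (i : Fin 5) : Sym2 V := s(f i, f (i + 1))

lemma ce_mem (i : Fin 5) : ce f i ∈ G.edgeSet :=
  (G.mem_edgeSet).mpr (f.map_adj (fin5_adj i))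

variable (hf : Function.Injective f)

include hf

lemma ce_inj : Function.Injective (ce f) := by
  intro i j h
  rw [ce, ce, Sym2.eq_iff] at h
  rcases h with ⟨h1, -⟩ | ⟨h1, h2⟩
  · exact hf h1
  · have e1 : i = j + 1 := hf h1
    have e2 : i + 1 = j := hf h2
    exfalso
    rw [e1] at e2
    exact fin5_succ_ne j e2

lemma ce_disj (i : Fin 5) : Disj (ce f i) (ce f (i + 2)) := by
  intro v hv1 hv2
  rw [ce, Sym2.mem_iff] at hv1 hv2
  obtain ⟨d1, d2, d3, d4⟩ := fin5_d i
  rcases hv1 with rfl | rfl <;> rcases hv2 with h | h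
  · exact d1 (hf h)
  · exact d2 (hf h)
  · exact d3 (hf h)
  · exact d4 (hf h)

/-- The `i`-th cycle edge as a vertex of the jump graph. -/
def cE (i : Fin 5) : G.edgeSet := ⟨ce f i, ce_mem f i⟩

lemma cE_inj : Function.Injective (cE f) := by
  intro i j h
  exact ce_inj f hf (congrArg Subtype.val h)

open Fin.CommRing in
/-- L1 : the jump graph again contains an injective copy of `C₅`. -/
lemma jump_hom_exists : ∃ g : cycleGraph 5 →g G.jumpGraph, Function.Injective g := by
  refine ⟨⟨fun i => cE f (2 * i), ?_⟩, ?_⟩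
  · intro a b hab
    rw [cycleGraph_adj] at hab
    rcases hab with h | h
    · have hab' : a = b + 1 := by rw [← h]; ring
      subst hab'
      have h2 : 2 * (b + 1) = 2 * b + 2 := by ring
      rw [h2]
      exact (jump_adj_of_disj (ce_disj f hf (2 * b))).symm
    · have hab' : b = a + 1 := by rw [← h]; ring
      subst hab'
      have h2 : 2 * (a + 1) = 2 * a + 2 := by ring
      rw [h2]
      exact jump_adj_of_disj (ce_disj f hf (2 * a))
  · intro a b h
    exact fin5_two_mul_inj a b (cE_inj f hf h)

omit hf in
open Classical in
/-- The set of cycle-edge indices whose edge is disjoint from `x`. -/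
noncomputable def goodF (x : Sym2 V) : Finset (Fin 5) :=
  univ.filter (fun i => Disj (ce f i) x)

open Classical in
lemma bad_filter_le_one_left (u : V) :
    (univ.filter (fun i : Fin 5 => f i = u)).card ≤ 1 := by
  refine card_le_one.mpr (fun a ha b hb => ?_)
  simp only [mem_filter] at ha hb
  exact hf (ha.2.trans hb.2.symm)

open Classical in
lemma bad_filter_le_one_right (u : V) :
    (univ.filter (fun i : Fin 5 => f (i + 1) = u)).card ≤ 1 := by
  refine card_le_one.mpr (fun a ha b hb => ?_)
  simp only [mem_filter] at ha hb
  have := hf (ha.2.trans hb.2.symm)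
  exact add_right_cancel this

open Classical in
lemma bad_subset (u w : V) :
    (univ.filter (fun i => ¬ Disj (ce f i) s(u, w))) ⊆
      ((univ.filter fun i : Fin 5 => f i = u) ∪ (univ.filter fun i : Fin 5 => f i = w))
      ∪ ((univ.filter fun i : Fin 5 => f (i + 1) = u) ∪
         (univ.filter fun i : Fin 5 => f (i + 1) = w)) := by
  intro i hi
  simp only [mem_filter, mem_univ, true_and, mem_union] at hi ⊢
  simp only [Disj, not_forall] at hi
  obtain ⟨v, hv1, hv2⟩ := hi
  rw [not_not] at hv2
  rw [ce, Sym2.mem_iff] at hv1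
  rw [Sym2.mem_iff] at hv2
  rcases hv1 with rfl | rfl <;> rcases hv2 with h | h <;> tauto

open Classical in
lemma bad_subset' (u w : V) (hu : u ∉ Set.range f) :
    (univ.filter (fun i => ¬ Disj (ce f i) s(u, w))) ⊆
      ((univ.filter fun i : Fin 5 => f i = w) ∪
       (univ.filter fun i : Fin 5 => f (i + 1) = w)) := by
  intro i hi
  simp only [mem_filter, mem_univ, true_and, mem_union] at hi ⊢
  simp only [Disj, not_forall] at hi
  obtain ⟨v, hv1, hv2⟩ := hi
  rw [not_not] at hv2
  rw [ce, Sym2.mem_iff] at hv1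
  rw [Sym2.mem_iff] at hv2
  rcases hv1 with rfl | rfl <;> rcases hv2 with h | h
  · exact absurd ⟨i, h⟩ hu
  · left; exact h
  · exact absurd ⟨i + 1, h⟩ hu
  · right; exact h

open Classical in
lemma good_card_aux (x : Sym2 V) (n : ℕ)
    (hb : (univ.filter (fun i => ¬ Disj (ce f i) x)).card ≤ n) :
    5 - n ≤ (goodF f x).card := by
  have h := card_filter_add_card_filter_not (s := (univ : Finset (Fin 5)))
    (p := fun i => Disj (ce f i) x)
  rw [card_univ, Fintype.card_fin] at h
  rw [goodF]
  omega

open Classical in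
lemma good_card_ge_one (x : Sym2 V) : 1 ≤ (goodF f x).card := by
  induction x using Sym2.ind with
  | _ u w =>
    refine good_card_aux f hf _ 4 ?_
    calc (univ.filter (fun i => ¬ Disj (ce f i) s(u, w))).card
        ≤ (((univ.filter fun i : Fin 5 => f i = u) ∪ (univ.filter fun i : Fin 5 => f i = w))
          ∪ ((univ.filter fun i : Fin 5 => f (i + 1) = u) ∪
             (univ.filter fun i : Fin 5 => f (i + 1) = w))).card :=
          card_le_card (bad_subset f hf u w)
      _ ≤ (((univ.filter fun i : Fin 5 => f i = u) ∪
            (univ.filter fun i : Fin 5 => f i = w))).card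
          + (((univ.filter fun i : Fin 5 => f (i + 1) = u) ∪
              (univ.filter fun i : Fin 5 => f (i + 1) = w))).card := card_union_le _ _
      _ ≤ ((univ.filter fun i : Fin 5 => f i = u).card
            + (univ.filter fun i : Fin 5 => f i = w).card)
          + ((univ.filter fun i : Fin 5 => f (i + 1) = u).card
            + (univ.filter fun i : Fin 5 => f (i + 1) = w).card) :=
          Nat.add_le_add (card_union_le _ _) (card_union_le _ _)
      _ ≤ 4 := by
          have h1 := bad_filter_le_one_left f hf u
          have h2 := bad_filter_le_one_left f hf w
          have h3 := bad_filter_le_one_right f hf u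
          have h4 := bad_filter_le_one_right f hf w
          omega

open Classical in
lemma good_card_ge_three (u w : V) (hu : u ∉ Set.range f) :
    3 ≤ (goodF f s(u, w)).card := by
  refine good_card_aux f hf _ 2 ?_
  calc (univ.filter (fun i => ¬ Disj (ce f i) s(u, w))).card
      ≤ ((univ.filter fun i : Fin 5 => f i = w) ∪
         (univ.filter fun i : Fin 5 => f (i + 1) = w)).card :=
        card_le_card (bad_subset' f hf u w hu)
    _ ≤ (univ.filter fun i : Fin 5 => f i = w).card
        + (univ.filter fun i : Fin 5 => f (i + 1) = w).card := card_union_le _ _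
    _ ≤ 2 := by
        have h2 := bad_filter_le_one_left f hf w
        have h4 := bad_filter_le_one_right f hf w
        omega

/-- A chosen cycle-edge index disjoint from `x`. -/
noncomputable def jsel (x : Sym2 V) : Fin 5 :=
  (goodF f x).min' (card_pos.mp (good_card_ge_one f hf x))

lemma jsel_disj (x : Sym2 V) : Disj (ce f (jsel f hf x)) x := by
  classical
  have := (goodF f x).min'_mem (card_pos.mp (good_card_ge_one f hf x))
  simp only [goodF, mem_filter] at this
  exact this.2

/-- L3 : no vertex of the jump graph is isolated. -/
lemma no_isolated (e : G.edgeSet) : ∃ e' : G.edgeSet, G.jumpGraph.Adj e e' :=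
  ⟨cE f (jsel f hf (e : Sym2 V)),
    (jump_adj_of_disj (jsel_disj f hf (e : Sym2 V))).symm⟩

section Count

variable [Fintype V]

omit hf in
open Classical in
private lemma image_sub : univ.image (ce f) ⊆ G.edgeFinset := by
  intro x hx
  rw [mem_image] at hx
  obtain ⟨i, -, rfl⟩ := hx
  exact mem_edgeFinset.mpr (ce_mem f i)

open Classical in
private lemma image_card : (univ.image (ce f)).card = 5 := by
  rw [card_image_of_injective _ (ce_inj f hf), card_univ, Fintype.card_fin]

open Classical in
/-- L2 : the jump graph has at least as many edges. -/
lemma card_jump_ge : Nat.card G.edgeSet ≤ Nat.card G.jumpGraph.edgeSet := by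
  have hconv : Nat.card G.edgeSet = G.edgeFinset.card := by
    rw [Nat.card_coe_set_eq, Set.ncard_eq_toFinset_card']
    congr 1
  rw [hconv]
  set X : Finset (Sym2 V) := G.edgeFinset \ univ.image (ce f) with hXdef
  have hXcard : X.card = G.edgeFinset.card - 5 := by
    rw [hXdef, card_sdiff_of_subset (image_sub f), image_card f hf]
  have h5le : 5 ≤ G.edgeFinset.card := by
    rw [← image_card f hf]; exact card_le_card (image_sub f)
  have hxmem : ∀ x ∈ X, x ∈ G.edgeSet := fun x hx =>
    mem_edgeFinset.mp (mem_sdiff.mp hx).1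
  have hnotim : ∀ x ∈ X, ∀ i, ce f i ≠ x := by
    intro x hx i h
    exact (mem_sdiff.mp hx).2 (mem_image.mpr ⟨i, mem_univ i, h⟩)
  let φ : Fin 5 ⊕ ↥X → G.jumpGraph.edgeSet := fun a =>
    match a with
    | Sum.inl i => ⟨s(cE f i, cE f (i + 2)),
        (SimpleGraph.mem_edgeSet _).mpr (jump_adj_of_disj (ce_disj f hf i))⟩
    | Sum.inr x => ⟨s(cE f (jsel f hf x.1), ⟨x.1, hxmem x.1 x.2⟩),
        (SimpleGraph.mem_edgeSet _).mpr (jump_adj_of_disj (jsel_disj f hf x.1))⟩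
  have hφ : Function.Injective φ := by
    rintro (i | x) (j | y) h <;>
      simp only [φ, cE, Subtype.ext_iff, Sym2.eq_iff] at h
    · rcases h with ⟨h1, -⟩ | ⟨h1, h2⟩
      · exact congrArg Sum.inl (ce_inj f hf h1)
      · exfalso
        have e1 : i = j + 2 := ce_inj f hf h1
        have e2 : i + 2 = j := ce_inj f hf h2
        rw [e1] at e2
        exact fin5_p j e2
    · exfalso
      rcases h with ⟨-, h2⟩ | ⟨h1, -⟩
      · exact hnotim y.1 y.2 (i + 2) h2
      · exact hnotim y.1 y.2 i h1
    · exfalso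
      rcases h with ⟨-, h2⟩ | ⟨-, h2⟩
      · exact hnotim x.1 x.2 (j + 2) h2.symm
      · exact hnotim x.1 x.2 j h2.symm
    · rcases h with ⟨-, h2⟩ | ⟨h1, -⟩
      · exact congrArg Sum.inr (Subtype.ext h2)
      · exfalso
        exact hnotim y.1 y.2 (jsel f hf x.1) h1
  have hcard := Nat.card_le_card_of_injective φ hφ
  rw [Nat.card_sum, Nat.card_eq_fintype_card, Fintype.card_fin,
    Nat.card_eq_finsetCard] at hcard
  omega

open Classical in
/-- L4 : if every vertex is non-isolated and there are at least 6 vertices, the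
jump graph has at least two more edges. -/
lemma card_jump_ge_two (hiso : ∀ v : V, ∃ w, G.Adj v w) (hV : 6 ≤ Nat.card V) :
    Nat.card G.edgeSet + 2 ≤ Nat.card G.jumpGraph.edgeSet := by
  have hconv : Nat.card G.edgeSet = G.edgeFinset.card := by
    rw [Nat.card_coe_set_eq, Set.ncard_eq_toFinset_card']
    congr 1
  rw [hconv]
  -- a vertex outside the image of f
  have hu : ∃ u : V, u ∉ Set.range f := by
    by_contra hc
    push_neg at hc
    have hsurj : Function.Surjective f := fun u => hc u
    have : Nat.card (Fin 5) = Nat.card V := Nat.card_eq_of_bijective f ⟨hf, hsurj⟩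
    rw [Nat.card_eq_fintype_card, Fintype.card_fin] at this
    omega
  obtain ⟨u, hu⟩ := hu
  obtain ⟨w, huw⟩ := hiso u
  set xs : Sym2 V := s(u, w) with hxs
  have hxsE : xs ∈ G.edgeSet := (G.mem_edgeSet).mpr huw
  set X : Finset (Sym2 V) := G.edgeFinset \ univ.image (ce f) with hXdef
  have hXcard : X.card = G.edgeFinset.card - 5 := by
    rw [hXdef, card_sdiff_of_subset (image_sub f), image_card f hf]
  have h5le : 5 ≤ G.edgeFinset.card := by
    rw [← image_card f hf]; exact card_le_card (image_sub f)
  have hxmem : ∀ x ∈ X, x ∈ G.edgeSet := fun x hx =>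
    mem_edgeFinset.mp (mem_sdiff.mp hx).1
  have hnotim : ∀ x ∈ X, ∀ i, ce f i ≠ x := by
    intro x hx i h
    exact (mem_sdiff.mp hx).2 (mem_image.mpr ⟨i, mem_univ i, h⟩)
  have hxsX : xs ∈ X := by
    rw [hXdef, mem_sdiff]
    refine ⟨mem_edgeFinset.mpr hxsE, ?_⟩
    intro hc
    rw [mem_image] at hc
    obtain ⟨i, -, hi⟩ := hc
    have humem : u ∈ ce f i := by rw [hi, hxs]; exact Sym2.mem_mk_left u w
    rw [ce, Sym2.mem_iff] at humem
    rcases humem with h | h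
    · exact hu ⟨i, h.symm⟩
    · exact hu ⟨i + 1, h.symm⟩
  have hT : 3 ≤ (goodF f xs).card := good_card_ge_three f hf u w hu
  -- the injection
  let φ : Fin 5 ⊕ (↥(X.erase xs) ⊕ ↥(goodF f xs)) → G.jumpGraph.edgeSet := fun a =>
    match a with
    | Sum.inl i => ⟨s(cE f i, cE f (i + 2)),
        (SimpleGraph.mem_edgeSet _).mpr (jump_adj_of_disj (ce_disj f hf i))⟩
    | Sum.inr (Sum.inl x) =>
        ⟨s(cE f (jsel f hf x.1), ⟨x.1, hxmem x.1 (mem_of_mem_erase x.2)⟩),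
          (SimpleGraph.mem_edgeSet _).mpr (jump_adj_of_disj (jsel_disj f hf x.1))⟩
    | Sum.inr (Sum.inr j) =>
        ⟨s(cE f j.1, ⟨xs, hxsE⟩),
          (SimpleGraph.mem_edgeSet _).mpr (jump_adj_of_disj (by
            have := j.2
            simp only [goodF, mem_filter] at this
            exact this.2))⟩
  have hφ : Function.Injective φ := by
    rintro (i | x | j) (i' | x' | j') h <;>
      simp only [φ, cE, Subtype.ext_iff, Sym2.eq_iff] at h
    · rcases h with ⟨h1, -⟩ | ⟨h1, h2⟩
      · exact congrArg Sum.inl (ce_inj f hf h1)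
      · exfalso
        have e1 : i = i' + 2 := ce_inj f hf h1
        have e2 : i + 2 = i' := ce_inj f hf h2
        rw [e1] at e2
        exact fin5_p i' e2
    · exfalso
      rcases h with ⟨-, h2⟩ | ⟨h1, -⟩
      · exact hnotim x'.1 (mem_of_mem_erase x'.2) (i + 2) h2
      · exact hnotim x'.1 (mem_of_mem_erase x'.2) i h1
    · exfalso
      rcases h with ⟨-, h2⟩ | ⟨h1, -⟩
      · exact hnotim xs hxsX (i + 2) h2
      · exact hnotim xs hxsX i h1
    · exfalso
      rcases h with ⟨-, h2⟩ | ⟨-, h2⟩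
      · exact hnotim x.1 (mem_of_mem_erase x.2) (i' + 2) h2.symm
      · exact hnotim x.1 (mem_of_mem_erase x.2) i' h2.symm
    · rcases h with ⟨-, h2⟩ | ⟨h1, -⟩
      · exact congrArg (fun t => Sum.inr (Sum.inl t)) (Subtype.ext h2)
      · exfalso
        exact hnotim x'.1 (mem_of_mem_erase x'.2) (jsel f hf x.1) h1
    · exfalso
      rcases h with ⟨-, h2⟩ | ⟨-, h2⟩
      · exact ne_of_mem_erase x.2 h2
      · exact hnotim x.1 (mem_of_mem_erase x.2) j'.1 h2.symm
    · exfalso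
      rcases h with ⟨-, h2⟩ | ⟨-, h2⟩
      · exact hnotim xs hxsX (i' + 2) h2.symm
      · exact hnotim xs hxsX i' h2.symm
    · exfalso
      rcases h with ⟨-, h2⟩ | ⟨-, h2⟩
      · exact ne_of_mem_erase x'.2 h2.symm
      · exact hnotim xs hxsX (jsel f hf x'.1) h2.symm
    · rcases h with ⟨h1, -⟩ | ⟨h1, -⟩
      · exact congrArg (fun t => Sum.inr (Sum.inr t)) (Subtype.ext (ce_inj f hf h1))
      · exfalso
        exact hnotim xs hxsX j.1 h1
  have hcard := Nat.card_le_card_of_injective φ hφ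
  rw [Nat.card_sum, Nat.card_sum, Nat.card_eq_fintype_card, Fintype.card_fin,
    Nat.card_eq_finsetCard, Nat.card_eq_finsetCard, card_erase_of_mem hxsX] at hcard
  have hX1 : 1 ≤ X.card := card_pos.mpr ⟨xs, hxsX⟩
  omega

end Count

end WithHom

/-- Bundle-level invariant: finite vertex type and an injective copy of `C₅`. -/
def GoodB (g : GraphBundle) : Prop :=
  Finite g.1 ∧ ∃ f : cycleGraph 5 →g g.2, Function.Injective f

lemma goodB_step {g : GraphBundle} (h : GoodB g) : GoodB (jumpB g) := by
  obtain ⟨hfin, f, hf⟩ := h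
  haveI : Finite g.1 := hfin
  haveI : Finite (Sym2 g.1) := Finite.of_surjective (fun p : g.1 × g.1 => s(p.1, p.2))
    (fun z => Sym2.ind (fun x y => ⟨(x, y), rfl⟩) z)
  haveI hfin2 : Finite ↥g.2.edgeSet := Subtype.finite
  obtain ⟨g', hg'⟩ := jump_hom_exists f hf
  exact ⟨hfin2, g', hg'⟩

lemma mono_step {g : GraphBundle} (h : GoodB g) : edgeCount g ≤ edgeCount (jumpB g) := by
  obtain ⟨hfin, f, hf⟩ := h
  haveI : Finite g.1 := hfin
  haveI := Fintype.ofFinite g.1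
  exact card_jump_ge f hf

lemma strict_step {g : GraphBundle} (h : GoodB g)
    (hiso : ∀ v : g.1, ∃ w, g.2.Adj v w) (hV : 6 ≤ Nat.card g.1) :
    edgeCount g + 2 ≤ edgeCount (jumpB g) := by
  obtain ⟨hfin, f, hf⟩ := h
  haveI : Finite g.1 := hfin
  haveI := Fintype.ofFinite g.1
  exact card_jump_ge_two f hf hiso hV

end JP

/-- If `G` has `C₅` as a strict subgraph (a 5-cycle plus at least one more edge) then the edge
counts of the iterated jump graphs are monotone, eventually strictly increasing, and tend to
infinity. -/
theorem stmt16 {V : Type} [Fintype V] (G : SimpleGraph V)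
    (f : cycleGraph 5 →g G) (hf : Function.Injective f)
    (h6 : 6 ≤ Nat.card G.edgeSet) :
    (∀ k : ℕ, edgeCount (jumpB^[k] ⟨V, G⟩) ≤ edgeCount (jumpB^[k + 1] ⟨V, G⟩)) ∧
    (∃ K : ℕ, ∀ k ≥ K, edgeCount (jumpB^[k] ⟨V, G⟩) < edgeCount (jumpB^[k + 1] ⟨V, G⟩)) ∧
    Filter.Tendsto (fun k : ℕ => edgeCount (jumpB^[k] ⟨V, G⟩)) Filter.atTop Filter.atTop := by
  have hGood : ∀ k, JP.GoodB (jumpB^[k] ⟨V, G⟩) := by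
    intro k
    induction k with
    | zero => exact ⟨Finite.of_fintype V, f, hf⟩
    | succ n ih =>
      rw [show jumpB^[n + 1] ⟨V, G⟩ = jumpB (jumpB^[n] ⟨V, G⟩) from
        Function.iterate_succ_apply' _ _ _]; exact JP.goodB_step ih
  have hmono : ∀ k : ℕ, edgeCount (jumpB^[k] ⟨V, G⟩) ≤ edgeCount (jumpB^[k + 1] ⟨V, G⟩) := by
    intro k
    rw [show jumpB^[k + 1] ⟨V, G⟩ = jumpB (jumpB^[k] ⟨V, G⟩) from
      Function.iterate_succ_apply' _ _ _]
    exact JP.mono_step (hGood k)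
  have hm6 : ∀ k, 6 ≤ edgeCount (jumpB^[k] ⟨V, G⟩) := by
    intro k
    induction k with
    | zero => exact h6
    | succ n ih => exact ih.trans (hmono n)
  have hstrict : ∀ k, edgeCount (jumpB^[k + 1] ⟨V, G⟩) + 2 ≤
      edgeCount (jumpB^[k + 1 + 1] ⟨V, G⟩) := by
    intro k
    have h1 : jumpB^[k + 1] ⟨V, G⟩ = jumpB (jumpB^[k] ⟨V, G⟩) :=
      Function.iterate_succ_apply' _ _ _
    have h2 : jumpB^[k + 1 + 1] ⟨V, G⟩ = jumpB (jumpB^[k + 1] ⟨V, G⟩) :=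
      Function.iterate_succ_apply' _ _ _
    rw [h2]
    refine JP.strict_step (hGood (k + 1)) ?_ ?_
    · rw [h1]
      obtain ⟨hfin, f0, hf0⟩ := hGood k
      exact fun e => JP.no_isolated f0 hf0 e
    · rw [h1]
      exact hm6 k
  refine ⟨hmono, ⟨1, ?_⟩, ?_⟩
  · intro k hk
    obtain ⟨j, rfl⟩ := Nat.exists_eq_add_of_le hk
    have hj := hstrict j
    have e1 : 1 + j = j + 1 := Nat.add_comm 1 j
    rw [e1]
    omega
  · rw [← Filter.tendsto_add_atTop_iff_nat 1]
    have hsm : StrictMono (fun n => edgeCount (jumpB^[n + 1] ⟨V, G⟩)) := by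
      apply strictMono_nat_of_lt_succ
      intro n
      have := hstrict n
      omega
    exact Filter.tendsto_atTop_mono (fun n => hsm.le_apply) Filter.tendsto_id
end
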